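/- arXiv:1808.03375 — 6 statements merged into one kernel-verified Lean document; each statement's English description precedes it below -/
import Mathlib

section
/- Let f : X → X be a map, A ⊆ X, and R : A → ℕ_{≥1} a coherent induced time for the induced map F(x) = f^{R(x)}(x). If x ∈ A_0 := ⋂_{n≥0} F^{-n}(X), 0 ≤ a < R(x), and f^a(x) ∈ A_0, then there exists b ≥ 1 with b ≤ #{a ≤ j < R(x) : f^j(x) ∈ A_0} such that R(x) = a + Σ_{j=0}^{b-1} R(F^j(f^a(x))). In particular F(x) = F^b(f^a(x)). -/
/-! Write `y = f^[a] x` and let `s k = a + ∑_{j<k} R (F^[j] y)`, so that `f^[s k] x = F^[k] y`.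
Since `R ≥ 1` on `A`, `s` is strictly increasing, and coherence applied at `x` and the time `s k`
says that `s` cannot jump over `R x`: once `s k < R x`, also `s (k + 1) ≤ R x`. Starting from
`s 0 = a < R x`, the sequence therefore hits `R x` exactly, at some `b ≥ 1`, and the `b` times
`s 0 < ⋯ < s (b - 1)` are distinct elements of `[a, R x)` whose orbit points lie in `A₀`. -/

open Finset

theorem Nat.exists_eq_of_strictMono_of_step_le {s : ℕ → ℕ} (hs : StrictMono s) {N : ℕ}
    (h0 : s 0 < N) (hstep : ∀ k, s k < N → s (k + 1) ≤ N) :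
    ∃ b, 1 ≤ b ∧ s b = N ∧ ∀ k < b, s k < N := by
  have hex : ∃ k, N ≤ s k := ⟨N, hs.le_apply⟩
  have hb1 : 1 ≤ Nat.find hex := Nat.one_le_iff_ne_zero.mpr fun h ↦ by
    have := Nat.find_spec hex
    rw [h] at this
    omega
  have hbelow : ∀ k < Nat.find hex, s k < N := fun k hk ↦ not_le.mp (Nat.find_min hex hk)
  refine ⟨Nat.find hex, hb1, ?_, hbelow⟩
  have hprev := hstep _ (hbelow (Nat.find hex - 1) (by omega))
  rw [Nat.sub_add_cancel hb1] at hprev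
  exact le_antisymm hprev (Nat.find_spec hex)

theorem strictMono_sum_range_of_one_le {r : ℕ → ℕ} (hr : ∀ j, 1 ≤ r j) :
    StrictMono fun k ↦ ∑ j ∈ range k, r j :=
  strictMono_nat_of_lt_succ fun k ↦ by
    rw [sum_range_succ]
    exact Nat.lt_add_of_pos_right (hr k)

theorem Function.iterate_eq_iterate_sum_of_induced {X : Type*} {f F : X → X} {R : X → ℕ}
    (hF : ∀ x, F x = f^[R x] x) (x : X) (k : ℕ) :
    F^[k] x = f^[∑ j ∈ range k, R (F^[j] x)] x := by
  induction k with
  | zero => rfl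
  | succ k ih =>
    rw [iterate_succ_apply', hF, ih, ← iterate_add_apply, sum_range_succ, ← ih, add_comm]

/-- For a coherent induced time, the induced time of a point decomposes along the
orbit of any intermediate point of `A₀`. -/
theorem coherent_induced_time_decomposition {X : Type*} (f : X → X) (A : Set X)
    (R : X → ℕ)
    (hR1 : ∀ x ∈ A, 1 ≤ R x)
    (hcoh : ∀ x ∈ A, ∀ j, j < R x → f^[j] x ∈ A → R (f^[j] x) + j ≤ R x)
    (F : X → X) (hF : ∀ x, F x = f^[R x] x)
    (A₀ : Set X) (hA₀ : A₀ = {x | ∀ n : ℕ, F^[n] x ∈ A})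
    (x : X) (hx : x ∈ A₀) (a : ℕ) (ha : a < R x) (hfa : f^[a] x ∈ A₀) :
    ∃ b : ℕ, 1 ≤ b ∧
      b ≤ Set.ncard {j : ℕ | a ≤ j ∧ j < R x ∧ f^[j] x ∈ A₀} ∧
      R x = a + ∑ j ∈ Finset.range b, R (F^[j] (f^[a] x)) ∧
      F x = F^[b] (f^[a] x) := by
  subst hA₀
  obtain ⟨s, hs⟩ : ∃ s : ℕ → ℕ, ∀ k, s k = a + ∑ j ∈ range k, R (F^[j] (f^[a] x)) :=
    ⟨_, fun _ ↦ rfl⟩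
  have hs_orbit (k : ℕ) : f^[s k] x = F^[k] (f^[a] x) := by
    rw [hs, add_comm, Function.iterate_add_apply, Function.iterate_eq_iterate_sum_of_induced hF]
  have hs_mono : StrictMono s := fun k l hkl ↦ by
    rw [hs, hs]
    exact Nat.add_lt_add_left (strictMono_sum_range_of_one_le (fun j ↦ hR1 _ (hfa j)) hkl) a
  have hstep (k : ℕ) (hk : s k < R x) : s (k + 1) ≤ R x := by
    have := hcoh x (hx 0) (s k) hk (hs_orbit k ▸ hfa k)
    rw [hs_orbit, hs] at this
    rw [hs, sum_range_succ]
    omega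
  obtain ⟨b, hb1, hsb, hlt⟩ := Nat.exists_eq_of_strictMono_of_step_le hs_mono
    (by rwa [hs, sum_range_zero, add_zero]) hstep
  refine ⟨b, hb1, ?_, hsb ▸ hs b, by rw [hF, ← hsb, hs_orbit]⟩
  set J := {j | a ≤ j ∧ j < R x ∧ ∀ n, F^[n] (f^[j] x) ∈ A}
  have hJ : Set.MapsTo s (Set.Iio b) J := fun k hk ↦
    ⟨(hs k).symm ▸ Nat.le_add_right a _, hlt k hk, fun n ↦ by
      rw [hs_orbit, ← Function.iterate_add_apply]; exact hfa _⟩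
  have hJfin : J.Finite := (Set.finite_Iio (R x)).subset fun j hj ↦ hj.2.1
  calc b = (Set.Iio b).ncard := (Set.ncard_Iio_nat b).symm
    _ ≤ J.ncard := Set.ncard_le_ncard_of_injOn s hJ hs_mono.injective.injOn hJfin
end

section
/- Let f : X → X be a map and F(x) = f^{R(x)}(x) an induced map with coherent induced time R : A → ℕ_{≥1}. Then F is orbit-coherent: for all x, y ∈ ⋂_{j≥0} F^{-j}(X), the forward f-orbits of x and y intersect if and only if the forward F-orbits of x and y intersect. -/
/-!
Along the f-orbit of a point `z`, the F-orbit of a point `w = f^[j] z` with `j ≤ R z` advances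
through the window `[z, F z]` without overshooting its end: coherence at `z` gives
`R w + j ≤ R z`, so `F w` is again in the window and strictly closer to `F z`. Hence the F-orbit
of `w` hits `F z`. For a general `j`, replace `z` by `F z` until `w` lies in its window.
-/

open Function

def IsCoherentTime {X : Type*} (f : X → X) (A : Set X) (R : X → ℕ) : Prop :=
  ∀ x ∈ A, ∀ j, j < R x → f^[j] x ∈ A → R (f^[j] x) + j ≤ R x

namespace IsCoherentTime

variable {X : Type*} {f F : X → X} {A : Set X} {R : X → ℕ}

theorem exists_iterate_eq_map_of_le (hR1 : ∀ x ∈ A, 1 ≤ R x) (hcoh : IsCoherentTime f A R)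
    (hF : ∀ x, F x = f^[R x] x) {z : X} (hz : z ∈ A) (w : X) (j : ℕ)
    (hw : ∀ n, F^[n] w ∈ A) (hj : j ≤ R z) (hwz : w = f^[j] z) :
    ∃ k, F^[k] w = F z := by
  rcases hj.eq_or_lt with rfl | hlt
  · exact ⟨0, by rw [hwz, hF, iterate_zero_apply]⟩
  · have hRw : R w + j ≤ R z := hwz ▸ hcoh z hz j hlt (hwz ▸ hw 0)
    have hFw : F w = f^[R w + j] z := by rw [hF, hwz, ← iterate_add_apply]
    obtain ⟨k, hk⟩ := exists_iterate_eq_map_of_le hR1 hcoh hF hz (F w) (R w + j)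
      (fun n => iterate_succ_apply F n w ▸ hw (n + 1)) hRw hFw
    exact ⟨k + 1, by rw [iterate_succ_apply, hk]⟩
termination_by R z - j
decreasing_by have := hR1 w (hw 0); omega

theorem exists_iterate_eq_iterate_of_eq_iterate (hR1 : ∀ x ∈ A, 1 ≤ R x)
    (hcoh : IsCoherentTime f A R) (hF : ∀ x, F x = f^[R x] x) (z : X) (hz : ∀ n, F^[n] z ∈ A)
    {w : X} (hw : ∀ n, F^[n] w ∈ A) (j : ℕ) (hwz : w = f^[j] z) :
    ∃ k l, F^[k] w = F^[l] z := by
  by_cases hj : j ≤ R z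
  · obtain ⟨k, hk⟩ := exists_iterate_eq_map_of_le hR1 hcoh hF (hz 0) w j hw hj hwz
    exact ⟨k, 1, hk⟩
  · have hwFz : w = f^[j - R z] (F z) := by
      rw [hF, ← iterate_add_apply, Nat.sub_add_cancel (le_of_not_ge hj), hwz]
    obtain ⟨k, l, hkl⟩ := exists_iterate_eq_iterate_of_eq_iterate hR1 hcoh hF (F z)
      (fun n => iterate_succ_apply F n z ▸ hz (n + 1)) hw (j - R z) hwFz
    exact ⟨k, l + 1, by rw [hkl, iterate_succ_apply]⟩
termination_by j
decreasing_by have := hR1 z (hz 0); omega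

end IsCoherentTime

theorem exists_le_iterate_eq_iterate_induced {X : Type*} {f F : X → X} {A : Set X} {R : X → ℕ}
    (hR1 : ∀ x ∈ A, 1 ≤ R x) (hF : ∀ x, F x = f^[R x] x) {x : X} (hx : ∀ n, F^[n] x ∈ A) :
    ∀ k, ∃ s, k ≤ s ∧ F^[k] x = f^[s] x
  | 0 => ⟨0, le_rfl, rfl⟩
  | k + 1 => by
    obtain ⟨s, hks, hs⟩ := exists_le_iterate_eq_iterate_induced hR1 hF hx k
    refine ⟨R (F^[k] x) + s, by have := hR1 _ (hx k); omega, ?_⟩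
    rw [iterate_succ_apply', hF, iterate_add_apply, hs]

/-- An induced map with a coherent induced time is orbit-coherent. -/
theorem coherent_time_orbit_coherent {X : Type*} (f : X → X) (A : Set X) (R : X → ℕ)
    (hR1 : ∀ x ∈ A, 1 ≤ R x)
    (hcoh : ∀ x ∈ A, ∀ j, j < R x → f^[j] x ∈ A → R (f^[j] x) + j ≤ R x)
    (F : X → X) (hF : ∀ x, F x = f^[R x] x)
    (x y : X) (hx : ∀ n : ℕ, F^[n] x ∈ A) (hy : ∀ n : ℕ, F^[n] y ∈ A) :
    (∃ n m : ℕ, f^[n] x = f^[m] y) ↔ (∃ n m : ℕ, F^[n] x = F^[m] y) := by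
  constructor
  · rintro ⟨n, m, hnm⟩
    obtain ⟨s, hns, hs⟩ := exists_le_iterate_eq_iterate_induced hR1 hF hx n
    have hFnx : F^[n] x = f^[s - n + m] y := by
      rw [iterate_add_apply, ← hnm, ← iterate_add_apply, Nat.sub_add_cancel hns, hs]
    obtain ⟨k, l, hkl⟩ := IsCoherentTime.exists_iterate_eq_iterate_of_eq_iterate hR1 hcoh hF y hy
      (fun i => iterate_add_apply F i n x ▸ hx (i + n)) _ hFnx
    exact ⟨k + n, l, by rw [iterate_add_apply, hkl]⟩
  · rintro ⟨n, m, hnm⟩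
    obtain ⟨s, -, hs⟩ := exists_le_iterate_eq_iterate_induced hR1 hF hx n
    obtain ⟨t, -, ht⟩ := exists_le_iterate_eq_iterate_induced hR1 hF hy m
    exact ⟨s, t, by rw [← hs, ← ht, hnm]⟩
end

section
/- Let F be an orbit-coherent induced map (for f with induced time R), let A_0 = ⋂_{n≥0} F^{-n}(X), and let U ⊆ A_0 satisfy F^{-1}(U) = U. Then Ũ ∩ A_0 = U, where Ũ is the (f,R)-spreading of U, and the preimage under f restricted to the spreading of A_0 preserves Ũ: (f|_{Ã_0})^{-1}(Ũ) = Ũ. -/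
/-!
A point of `A₀` whose `f`-orbit meets the `f`-orbit of a point of `U` has, by orbit coherence,
an `F`-orbit meeting that of `U`; since `U` is both forward and backward `F`-invariant inside
`A₀`, the point lies in `U`. Thus `U` is saturated in `A₀` for `f`-orbits, and both identities
follow: `Ũ` meets `A₀` only in `U`, and a point `f^[j] x` of `Ã₀` with `f^[j+1] x ∈ Ũ` has
`x ∈ U`. Conversely `f` maps `Ũ` into itself, because the last step of the excursion from
`x ∈ U` lands at `F x ∈ U`.
-/

open Function Set

def spreading {X : Type*} (f : X → X) (R : X → ℕ) (U : Set X) : Set X :=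
  ⋃ x ∈ U, ⋃ j ∈ Finset.range (R x), {f^[j] x}

section Spreading

variable {X : Type*} {f : X → X} {R : X → ℕ} {U : Set X}

theorem mem_spreading {z : X} : z ∈ spreading f R U ↔ ∃ x ∈ U, ∃ j < R x, f^[j] x = z := by
  simp only [spreading, mem_iUnion, mem_singleton_iff, Finset.mem_range, exists_prop, eq_comm]

theorem subset_spreading (hR : ∀ x ∈ U, 1 ≤ R x) : U ⊆ spreading f R U :=
  fun x hx => mem_spreading.2 ⟨x, hx, 0, hR x hx, rfl⟩

theorem spreading_mono {V : Set X} (h : U ⊆ V) : spreading f R U ⊆ spreading f R V :=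
  biUnion_subset_biUnion_left h

theorem mapsTo_spreading {F : X → X} (hF : ∀ x, F x = f^[R x] x) (hR : ∀ x ∈ U, 1 ≤ R x)
    (hFU : MapsTo F U U) : MapsTo f (spreading f R U) (spreading f R U) := by
  intro z hz
  obtain ⟨x, hx, j, hj, rfl⟩ := mem_spreading.1 hz
  rw [← iterate_succ_apply' f j x]
  rcases (Nat.succ_le_of_lt hj).lt_or_eq with hlt | heq
  · exact mem_spreading.2 ⟨x, hx, j + 1, hlt, rfl⟩
  · rw [heq, ← hF]
    exact subset_spreading hR (hFU hx)

def OrbitSaturated (f : X → X) (A₀ U : Set X) : Prop :=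
  ∀ x ∈ A₀, ∀ y ∈ U, ∀ n m : ℕ, f^[n] x = f^[m] y → x ∈ U

theorem spreading_inter_eq {A₀ : Set X} (hU : U ⊆ A₀) (hR : ∀ x ∈ U, 1 ≤ R x)
    (hsat : OrbitSaturated f A₀ U) : spreading f R U ∩ A₀ = U := by
  refine Subset.antisymm ?_ fun x hx => ⟨subset_spreading hR hx, hU hx⟩
  rintro z ⟨hz, hzA₀⟩
  obtain ⟨x, hx, j, -, rfl⟩ := mem_spreading.1 hz
  exact hsat _ hzA₀ x hx 0 j rfl

theorem sep_mem_spreading_eq {A₀ : Set X} {F : X → X} (hF : ∀ x, F x = f^[R x] x)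
    (hU : U ⊆ A₀) (hR : ∀ x ∈ U, 1 ≤ R x) (hFU : MapsTo F U U)
    (hsat : OrbitSaturated f A₀ U) :
    {z ∈ spreading f R A₀ | f z ∈ spreading f R U} = spreading f R U := by
  refine Subset.antisymm ?_ fun z hz =>
    ⟨spreading_mono hU hz, mapsTo_spreading hF hR hFU hz⟩
  rintro z ⟨hz, hfz⟩
  obtain ⟨x, hx, j, hj, rfl⟩ := mem_spreading.1 hz
  obtain ⟨y, hy, k, -, hyx⟩ := mem_spreading.1 hfz
  rw [← iterate_succ_apply' f j x] at hyx
  exact mem_spreading.2 ⟨x, hsat x hx y hy (j + 1) k hyx.symm, j, hj, rfl⟩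

end Spreading

section InducedMap

variable {X : Type*} {F : X → X} {A₀ U : Set X}

theorem mapsTo_setOf_forall_iterate_mem (F : X → X) (A : Set X) :
    MapsTo F {x | ∀ n, F^[n] x ∈ A} {x | ∀ n, F^[n] x ∈ A} :=
  fun _ hx n => iterate_succ_apply F n _ ▸ hx (n + 1)

theorem mapsTo_of_sep_eq (hinv : {x ∈ A₀ | F x ∈ U} = U) : MapsTo F U U :=
  fun x hx => (hinv.symm ▸ hx : x ∈ {x ∈ A₀ | F x ∈ U}).2

theorem mem_of_iterate_mem (hA₀ : MapsTo F A₀ A₀) (hinv : {x ∈ A₀ | F x ∈ U} = U) :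
    ∀ (n : ℕ) {x : X}, x ∈ A₀ → F^[n] x ∈ U → x ∈ U
  | 0, _, _, h => h
  | n + 1, _, hx, h => hinv ▸ ⟨hx, mem_of_iterate_mem hA₀ hinv n (hA₀ hx) h⟩

theorem orbitSaturated_of_coherent {f : X → X}
    (horb : ∀ x ∈ A₀, ∀ y ∈ A₀, (∃ n m : ℕ, f^[n] x = f^[m] y) → ∃ n m : ℕ, F^[n] x = F^[m] y)
    (hA₀ : MapsTo F A₀ A₀) (hU : U ⊆ A₀) (hinv : {x ∈ A₀ | F x ∈ U} = U) :
    OrbitSaturated f A₀ U := by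
  intro x hx y hy n m hxy
  obtain ⟨n', m', hF⟩ := horb x hx y (hU hy) ⟨n, m, hxy⟩
  exact mem_of_iterate_mem hA₀ hinv n' hx (hF ▸ (mapsTo_of_sep_eq hinv).iterate m' hy)

end InducedMap

/-- For an orbit-coherent induced map, the spreading of an F-invariant subset of A₀
intersects A₀ exactly in the set, and the spreading is invariant under the
restriction of f to the spreading of A₀. -/
theorem orbit_coherent_spreading {X : Type*} (f : X → X) (A : Set X) (R : X → ℕ)
    (hR1 : ∀ x ∈ A, 1 ≤ R x)
    (F : X → X) (hF : ∀ x, F x = f^[R x] x)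
    (A₀ : Set X) (hA₀ : A₀ = {x | ∀ n : ℕ, F^[n] x ∈ A})
    (horb : ∀ x ∈ A₀, ∀ y ∈ A₀,
      ((∃ n m : ℕ, f^[n] x = f^[m] y) ↔ (∃ n m : ℕ, F^[n] x = F^[m] y)))
    (U : Set X) (hU : U ⊆ A₀)
    (hinv : {x ∈ A₀ | F x ∈ U} = U)
    (Ut At : Set X)
    (hUt : Ut = ⋃ x ∈ U, ⋃ j ∈ Finset.range (R x), {f^[j] x})
    (hAt : At = ⋃ x ∈ A₀, ⋃ j ∈ Finset.range (R x), {f^[j] x}) :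
    Ut ∩ A₀ = U ∧ {x ∈ At | f x ∈ Ut} = Ut := by
  subst hUt hAt hA₀
  have hRU : ∀ x ∈ U, 1 ≤ R x := fun x hx => hR1 x (hU hx 0)
  have hsat : OrbitSaturated f _ U :=
    orbitSaturated_of_coherent (fun x hx y hy => (horb x hx y hy).1)
      (mapsTo_setOf_forall_iterate_mem F A) hU hinv
  exact ⟨spreading_inter_eq hU hRU hsat,
    sep_mem_spreading_eq hF hU hRU (mapsTo_of_sep_eq hinv) hsat⟩
end

section
/- Let (X, 𝔄, μ) be a probability space, f : X → X measure-preserving, and F : A → X a measurable induced map with induced time R. If ν is an F-invariant probability measure, then μ̃ := Σ_{j≥0} (f^j)_*(ν|_{{R > j}}) is an f-invariant measure with total mass μ̃(X) = ∫ R dν. -/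
/-!
Write `μ̃ = ∑ⱼ (f^j)_*(ν|{R > j})`. Since `{R > j} = {R > j + 1} ⊔ {R = j + 1}`, pushing `μ̃`
forward by `f` moves every level of the tower one step up: the levels `j + 1 ≥ 1` of `μ̃`
reappear, while the tops `{R = j + 1}` are sent by `f^(j+1) = F` and together contribute `F_*ν`.
By `F`-invariance this is `ν`, the missing bottom level (`R ≥ 1` on `A`, which carries `ν`).
The mass is `∑ⱼ ν{R > j} = ∫ R dν`.
-/

open MeasureTheory
open scoped ENNReal

namespace MeasureTheory

variable {X : Type*} [MeasurableSpace X]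

theorem Measure.sum_nat_eq_add_sum_succ (m : ℕ → Measure X) :
    Measure.sum m = m 0 + Measure.sum fun j => m (j + 1) := by
  ext s hs
  rw [Measure.coe_add, Pi.add_apply, Measure.sum_apply _ hs, Measure.sum_apply _ hs]
  exact tsum_eq_zero_add' ENNReal.summable

theorem lintegral_natCast_eq_tsum_measure_lt (ν : Measure X) {R : X → ℕ} (hR : Measurable R) :
    ∫⁻ x, (R x : ℝ≥0∞) ∂ν = ∑' j : ℕ, ν {x | j < R x} := by
  have hcount : ∀ n : ℕ, (n : ℝ≥0∞) = ∑' j : ℕ, if j < n then 1 else 0 := fun n => by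
    rw [tsum_eq_sum (s := Finset.range n) fun j hj => by simp_all]
    simp [Finset.filter_true_of_mem fun j hj => Finset.mem_range.mp hj]
  have hmeas : ∀ j : ℕ, MeasurableSet {x | j < R x} := fun j => hR measurableSet_Ioi
  calc ∫⁻ x, (R x : ℝ≥0∞) ∂ν
      = ∫⁻ x, ∑' j : ℕ, {x | j < R x}.indicator 1 x ∂ν := by
        simp_rw [hcount, Set.indicator_apply, Set.mem_ofPred_eq, Pi.one_apply]
    _ = ∑' j : ℕ, ν {x | j < R x} := by
        rw [lintegral_tsum fun j => (measurable_one.indicator (hmeas j)).aemeasurable]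
        simp_rw [lintegral_indicator_one (hmeas _)]

theorem measurable_iterate_apply {f : X → X} (hf : Measurable f) {R : X → ℕ} (hR : Measurable R) :
    Measurable fun x => f^[R x] x :=
  (measurable_from_prod_countable_left (f := fun p : X × ℕ => f^[p.2] p.1)
    fun n => hf.iterate n).comp (measurable_id.prodMk hR)

/-- `ν` lifted to the tower `{(x, j) | j < R x}` and projected back to `X` by `(x, j) ↦ f^[j] x`. -/
noncomputable def towerProjection (ν : Measure X) (f : X → X) (R : X → ℕ) : Measure X :=
  Measure.sum fun j => (ν.restrict {x | j < R x}).map f^[j]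

variable {ν : Measure X} {f : X → X} {R : X → ℕ}

theorem towerProjection_apply_univ (hf : Measurable f) :
    towerProjection ν f R Set.univ = ∑' j : ℕ, ν {x | j < R x} := by
  rw [towerProjection, Measure.sum_apply _ MeasurableSet.univ]
  simp_rw [Measure.map_apply (hf.iterate _) MeasurableSet.univ, Set.preimage_univ,
    Measure.restrict_apply_univ]

theorem towerProjection_eq_restrict_add (ν : Measure X) (f : X → X) (R : X → ℕ) :
    towerProjection ν f R =
      ν.restrict {x | 0 < R x} +
        Measure.sum fun j => (ν.restrict {x | j + 1 < R x}).map f^[j + 1] := by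
  rw [towerProjection, Measure.sum_nat_eq_add_sum_succ, Function.iterate_zero, Measure.map_id]

theorem restrict_lt_eq_restrict_succ_lt_add (hR : Measurable R) (j : ℕ) :
    ν.restrict {x | j < R x} = ν.restrict {x | j + 1 < R x} + ν.restrict {x | R x = j + 1} := by
  rw [← Measure.restrict_union _ (measurableSet_eq_fun hR measurable_const)]
  · congr 1
    ext x
    simp only [Set.mem_ofPred_eq, Set.mem_union]
    omega
  · exact Set.disjoint_left.2 fun x (hlt : j + 1 < R x) (heq : R x = j + 1) => by omega

theorem sum_map_restrict_eq_map_iterate (hf : Measurable f) (hR : Measurable R) :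
    (Measure.sum fun j => (ν.restrict {x | R x = j + 1}).map f^[j + 1]) =
      (ν.restrict {x | 0 < R x}).map fun x => f^[R x] x := by
  have hlevel : ∀ j : ℕ, (ν.restrict {x | R x = j + 1}).map f^[j + 1] =
      (ν.restrict {x | R x = j + 1}).map fun x => f^[R x] x := fun j =>
    Measure.map_congr <| (ae_restrict_mem (measurableSet_eq_fun hR measurable_const)).mono
      fun x (hx : R x = j + 1) => by simp only [hx]
  have hunion : {x | 0 < R x} = ⋃ j : ℕ, {x | R x = j + 1} := by
    ext x
    simp only [Set.mem_ofPred_eq, Set.mem_iUnion]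
    exact ⟨fun h => ⟨R x - 1, by omega⟩, fun ⟨j, hj⟩ => by omega⟩
  rw [hunion, Measure.restrict_iUnion _ fun j => measurableSet_eq_fun hR measurable_const,
    Measure.map_sum (measurable_iterate_apply hf hR).aemeasurable]
  · exact congrArg Measure.sum (funext hlevel)
  · exact fun i j hij => Set.disjoint_left.2 fun x (hi : R x = i + 1) (hj : R x = j + 1) =>
      hij (by omega)

theorem map_towerProjection (hf : Measurable f) (hR : Measurable R) :
    (towerProjection ν f R).map f =
      (Measure.sum fun j => (ν.restrict {x | j + 1 < R x}).map f^[j + 1]) +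
        (ν.restrict {x | 0 < R x}).map fun x => f^[R x] x := by
  rw [towerProjection, Measure.map_sum hf.aemeasurable, ← sum_map_restrict_eq_map_iterate hf hR,
    Measure.sum_add_sum]
  refine congrArg Measure.sum (funext fun j => ?_)
  rw [Measure.map_map hf (hf.iterate j), ← Function.iterate_succ',
    restrict_lt_eq_restrict_succ_lt_add hR,
    Measure.map_add _ _ (hf.iterate _)]

theorem map_towerProjection_eq_self (hf : Measurable f) (hR : Measurable R)
    (hν : ν.map (fun x => f^[R x] x) = ν) (hpos : ∀ᵐ x ∂ν, 0 < R x) :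
    (towerProjection ν f R).map f = towerProjection ν f R := by
  have hrestrict : ν.restrict {x | 0 < R x} = ν := Measure.restrict_eq_self_of_ae_mem hpos
  rw [map_towerProjection hf hR, towerProjection_eq_restrict_add, hrestrict, hν, add_comm]

end MeasureTheory

theorem lift_projection_general {X : Type*} [MeasurableSpace X]
    (f : X → X) (hf : Measurable f)
    (A : Set X) (hA : MeasurableSet A) (R : X → ℕ) (hR : Measurable R)
    (hR1 : ∀ x ∈ A, 1 ≤ R x)
    (F : X → X) (hF : ∀ x, F x = f^[R x] x)
    (ν : Measure X) [IsProbabilityMeasure ν] (hνA : ν A = 1)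
    (hν : ν.map F = ν)
    (μt : Measure X)
    (hμt : μt = Measure.sum (fun j : ℕ => (ν.restrict {x ∈ A | j < R x}).map f^[j])) :
    μt.map f = μt ∧ μt Set.univ = ∫⁻ x, (R x : ℝ≥0∞) ∂ν := by
  have hA_ae : ∀ᵐ x ∂ν, x ∈ A := ae_iff.2 ((prob_compl_eq_zero_iff hA).2 hνA)
  have hμt_eq : μt = towerProjection ν f R := by
    rw [hμt, towerProjection]
    refine congrArg Measure.sum (funext fun j => ?_)
    have hsets : {x ∈ A | j < R x} =ᵐ[ν] {x | j < R x} :=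
      hA_ae.mono fun x hx => propext (and_iff_right hx)
    rw [Measure.restrict_congr_set hsets]
  obtain rfl : F = fun x => f^[R x] x := funext hF
  subst hμt_eq
  refine ⟨map_towerProjection_eq_self hf hR hν (hA_ae.mono hR1), ?_⟩
  rw [towerProjection_apply_univ hf, lintegral_natCast_eq_tsum_measure_lt ν hR]

/-- Folklore result II: the projection of an F-invariant probability is an
f-invariant measure with total mass ∫ R dν. -/
theorem lift_projection {X : Type*} [MeasurableSpace X]
    (μ : Measure X) [IsProbabilityMeasure μ] (f : X → X) (hf : Measurable f)
    (hμ : μ.map f = μ)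
    (A : Set X) (hA : MeasurableSet A) (R : X → ℕ) (hR : Measurable R)
    (hR1 : ∀ x ∈ A, 1 ≤ R x)
    (F : X → X) (hF : ∀ x, F x = f^[R x] x)
    (ν : Measure X) [IsProbabilityMeasure ν] (hνA : ν A = 1)
    (hν : ν.map F = ν)
    (μt : Measure X)
    (hμt : μt = Measure.sum (fun j : ℕ => (ν.restrict {x ∈ A | j < R x}).map f^[j])) :
    μt.map f = μt ∧ μt Set.univ = ∫⁻ x, (R x : ℝ≥0∞) ∂ν :=
  lift_projection_general f hf A hA R hR hR1 F hF ν hνA hν μt hμt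
end

section
/- Let f : X → X be an injective map, 𝒰 an f-coherent schedule of events, B_𝒰 its coherent block, and F(x) = f^{min 𝒰(x)}(x) the first 𝒰-time map defined on X_1(𝒰) = {x : 𝒰(x) ≠ ∅}. Then F(B_𝒰 ∩ X_1(𝒰)) ⊆ B_𝒰, the restriction F|_{B_𝒰 ∩ X_1(𝒰)} is injective, and F restricted to B_𝒰 ∩ X_1(𝒰) coincides with the first return map (under f) to B_𝒰. -/
/-!
On the coherent block `B`, the schedule is exactly the set of return times to `B`: a time
`j ∈ 𝒰 x` carries `x` back into `B` by (P1) for the times `≤ j` and by (P2) for the later ones,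
while conversely a return `f^[j] x ∈ B` has, by injectivity, `x` as its only `j`-th preimage, which
must therefore be scheduled at `j`. Hence the first `𝒰`-time map is the first return map to `B`,
and a first return map of an injective map is injective.
-/

open Function Set

section

variable {X : Type*}

def returnTimes (f : X → X) (s : Set X) (x : X) : Set ℕ := {j | 1 ≤ j ∧ f^[j] x ∈ s}

noncomputable def firstReturn (f : X → X) (s : Set X) (x : X) : X :=
  f^[sInf (returnTimes f s x)] x

theorem eq_of_firstReturn_eq {f : X → X} (hf : Injective f) {s : Set X} {x x' : X}
    (hx : x ∈ s) (hret : (returnTimes f s x).Nonempty)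
    (hle : sInf (returnTimes f s x) ≤ sInf (returnTimes f s x'))
    (heq : firstReturn f s x = firstReturn f s x') : x = x' := by
  set n := sInf (returnTimes f s x)
  set m := sInf (returnTimes f s x')
  have hn : 1 ≤ n := (Nat.sInf_mem hret).1
  have hx_eq : x = f^[m - n] x' := by
    apply hf.iterate n
    rw [← iterate_add_apply, Nat.add_sub_cancel' hle]
    exact heq
  have hmn : m - n = 0 := by
    by_contra hmn
    exact Nat.notMem_of_lt_sInf (s := returnTimes f s x') (by omega) ⟨by omega, hx_eq ▸ hx⟩
  rwa [hmn, iterate_zero_apply] at hx_eq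

theorem injOn_firstReturn {f : X → X} (hf : Injective f) (s : Set X) :
    InjOn (firstReturn f s) {x ∈ s | (returnTimes f s x).Nonempty} := by
  rintro x ⟨hx, hxret⟩ x' ⟨hx', hx'ret⟩ heq
  rcases le_total (sInf (returnTimes f s x)) (sInf (returnTimes f s x')) with hle | hle
  · exact eq_of_firstReturn_eq hf hx hxret hle heq
  · exact (eq_of_firstReturn_eq hf hx' hx'ret hle heq.symm).symm

structure IsCoherentSchedule (f : X → X) (𝒰 : X → Set ℕ) : Prop where
  sub_mem_iterate : ∀ x, ∀ n ∈ 𝒰 x, ∀ j < n, n - j ∈ 𝒰 (f^[j] x)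
  add_mem : ∀ x, ∀ n ∈ 𝒰 x, ∀ m ∈ 𝒰 (f^[n] x), n + m ∈ 𝒰 x

/-- The paper's `B_𝒰`; the condition `x ∈ ⋂ n, range f^[n]` is carried by the witnesses `y`. -/
def coherentBlock (f : X → X) (𝒰 : X → Set ℕ) : Set X :=
  {x | ∀ j : ℕ, 1 ≤ j → ∃ y, f^[j] y = x ∧ j ∈ 𝒰 y}

theorem mem_of_iterate_mem_coherentBlock {f : X → X} (hf : Injective f) {𝒰 : X → Set ℕ}
    {x : X} {k : ℕ} (hk : 1 ≤ k) (hx : f^[k] x ∈ coherentBlock f 𝒰) : k ∈ 𝒰 x := by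
  obtain ⟨y, hy, hyk⟩ := hx k hk
  rwa [← hf.iterate k hy]

namespace IsCoherentSchedule

variable {f : X → X} {𝒰 : X → Set ℕ}

theorem iterate_mem_coherentBlock (h𝒰 : IsCoherentSchedule f 𝒰) {x : X} {n : ℕ}
    (hx : x ∈ coherentBlock f 𝒰) (hn : n ∈ 𝒰 x) : f^[n] x ∈ coherentBlock f 𝒰 := by
  intro j hj
  rcases le_or_gt j n with hle | hlt
  · refine ⟨f^[n - j] x, ?_, ?_⟩
    · rw [← iterate_add_apply, Nat.add_sub_cancel' hle]
    · simpa [Nat.sub_sub_self hle] using h𝒰.sub_mem_iterate x n hn (n - j) (by omega)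
  · obtain ⟨y, hy, hyU⟩ := hx (j - n) (by omega)
    have hsum := h𝒰.add_mem y (j - n) hyU n (hy ▸ hn)
    rw [Nat.sub_add_cancel hlt.le] at hsum
    refine ⟨y, ?_, hsum⟩
    rw [← Nat.add_sub_cancel' hlt.le, iterate_add_apply, hy]

theorem eq_returnTimes_coherentBlock (h𝒰 : IsCoherentSchedule f 𝒰) (hf : Injective f)
    {x : X} (h0 : 0 ∉ 𝒰 x) (hx : x ∈ coherentBlock f 𝒰) :
    𝒰 x = returnTimes f (coherentBlock f 𝒰) x := by
  ext n
  refine ⟨fun hn => ⟨?_, h𝒰.iterate_mem_coherentBlock hx hn⟩,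
    fun hn => mem_of_iterate_mem_coherentBlock hf hn.1 hn.2⟩
  exact Nat.one_le_iff_ne_zero.mpr fun h => h0 (h ▸ hn)

end IsCoherentSchedule

end

/-- The first 𝒰-time map preserves the coherent block, is injective on it, and is
the first return map to the coherent block. -/
theorem coherent_block_first_return {X : Type*} (f : X → X)
    (hf : Function.Injective f)
    (𝒰 : X → Set ℕ) (h0 : ∀ x, 0 ∉ 𝒰 x)
    (hP1 : ∀ x, ∀ n ∈ 𝒰 x, ∀ j < n, n - j ∈ 𝒰 (f^[j] x))
    (hP2 : ∀ x, ∀ n ∈ 𝒰 x, ∀ m ∈ 𝒰 (f^[n] x), n + m ∈ 𝒰 x)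
    (B : Set X) (hB : B = {x | ∀ j : ℕ, 1 ≤ j → ∃ y, f^[j] y = x ∧ j ∈ 𝒰 y})
    (X₁ : Set X) (hX₁ : X₁ = {x | (𝒰 x).Nonempty})
    (F : X → X) (hF : ∀ x, F x = f^[sInf (𝒰 x)] x) :
    F '' (B ∩ X₁) ⊆ B ∧ Set.InjOn F (B ∩ X₁) ∧
    (∀ x ∈ B ∩ X₁, sInf (𝒰 x) = sInf {j : ℕ | 1 ≤ j ∧ f^[j] x ∈ B}) := by
  have h𝒰 : IsCoherentSchedule f 𝒰 := ⟨hP1, hP2⟩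
  change B = coherentBlock f 𝒰 at hB
  subst hB hX₁
  have hret : ∀ x ∈ coherentBlock f 𝒰, 𝒰 x = returnTimes f (coherentBlock f 𝒰) x :=
    fun x hx => h𝒰.eq_returnTimes_coherentBlock hf (h0 x) hx
  have hF_eq : EqOn (firstReturn f (coherentBlock f 𝒰)) F
      (coherentBlock f 𝒰 ∩ {x | (𝒰 x).Nonempty}) :=
    fun x hx => by rw [hF, hret x hx.1, firstReturn]
  refine ⟨?_, ?_, fun x hx => by rw [hret x hx.1, returnTimes]⟩
  · rintro _ ⟨x, ⟨hxB, hx1⟩, rfl⟩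
    rw [hF]
    exact h𝒰.iterate_mem_coherentBlock hxB (Nat.sInf_mem hx1)
  · refine ((injOn_firstReturn hf _).mono ?_).congr hF_eq
    exact fun x hx => ⟨hx.1, hret x hx.1 ▸ hx.2⟩
end

section
/- Let (X, d) be a metric space, f : X → X measurable, R : X → ℕ ∪ {+∞} lower semicontinuous, and x ∈ X. Let 𝛀_f(x) be the set of weak* accumulation points of the empirical measures (1/n) Σ_{j=0}^{n-1} δ_{f^j(x)}. Then for every μ ∈ 𝛀_f(x) and every n ≥ 1, μ({R ≥ n}) ≤ d^+_ℕ({j ≥ 0 : R(f^j(x)) ≥ n}). Consequently ∫ R dμ ≤ Σ_{n=1}^∞ d^+_ℕ({j ≥ 0 : R(f^j(x)) ≥ n}), and if lim_{n→∞} d^+_ℕ({j ≥ 0 : R(f^j(x)) ≥ n}) = 0 then μ({R = +∞}) = 0 for every μ ∈ 𝛀_f(x). -/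
open MeasureTheory Filter Topology
open scoped ENNReal

/-! Every empirical measure `(1/N) ∑_{j<N} δ_{z j}` gives an open set `G` the proportion of times
`j < N` with `z j ∈ G`. Since `{R ≥ n}` is open for lower semicontinuous `R`, the portmanteau
inequality `μ G ≤ liminf μ_N G` along the convergent subsequence bounds `μ {R ≥ n}` by the upper
density of the visits. Summing over `n` via `∫ R dμ = ∑_{n ≥ 1} μ {R ≥ n}` gives the integral
bound, and `{R = ∞} ⊆ {R ≥ n}` for every `n` gives the last claim. -/

noncomputable def upperDensity (U : Set ℕ) : ℝ≥0∞ :=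
  limsup (fun N : ℕ => (Set.ncard {j | j < N ∧ j ∈ U} : ℝ≥0∞) / N) atTop

section EmpiricalMeasure

variable {X : Type*} [MeasurableSpace X] (z : ℕ → X)

noncomputable def empiricalMeasure (N : ℕ) : Measure X :=
  (N : ℝ≥0∞)⁻¹ • ∑ j ∈ Finset.range N, Measure.dirac (z j)

theorem empiricalMeasure_apply (N : ℕ) {S : Set X} (hS : MeasurableSet S) :
    empiricalMeasure z N S = (Set.ncard {j | j < N ∧ z j ∈ S} : ℝ≥0∞) / N := by
  classical
  have hcount : {j | j < N ∧ z j ∈ S} = ↑((Finset.range N).filter fun j => z j ∈ S) := by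
    ext j
    simp
  rw [empiricalMeasure, Measure.smul_apply, Measure.finsetSum_apply]
  simp only [Measure.dirac_apply' _ hS, Set.indicator_apply, Pi.one_apply]
  rw [Finset.sum_boole, hcount, Set.ncard_coe_finset, ENNReal.div_eq_inv_mul, smul_eq_mul]

theorem isProbabilityMeasure_empiricalMeasure {N : ℕ} (hN : N ≠ 0) :
    IsProbabilityMeasure (empiricalMeasure z N) := by
  constructor
  rw [empiricalMeasure_apply z N MeasurableSet.univ]
  simp only [Set.mem_univ, and_true]
  rw [Set.Iio_def, Set.ncard_Iio_nat]
  exact ENNReal.div_self (by exact_mod_cast hN) (ENNReal.natCast_ne_top N)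

theorem integral_empiricalMeasure [MeasurableSingletonClass X] (N : ℕ) (g : X → ℝ) :
    ∫ y, g y ∂empiricalMeasure z N = (∑ j ∈ Finset.range N, g (z j)) / N := by
  rw [empiricalMeasure, integral_smul_measure,
    integral_finsetSum_measure fun j _ => integrable_dirac enorm_lt_top]
  simp only [integral_dirac, ENNReal.toReal_inv, ENNReal.toReal_natCast, smul_eq_mul,
    inv_mul_eq_div]

theorem measure_le_upperDensity_of_isOpen [TopologicalSpace X] [OpensMeasurableSpace X]
    [HasOuterApproxClosed X] {μ : Measure X} [IsProbabilityMeasure μ] {φ : ℕ → ℕ}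
    (hφ : Tendsto φ atTop atTop) (hφ0 : ∀ i, φ i ≠ 0)
    (hconv : ∀ g : BoundedContinuousFunction X ℝ,
      Tendsto (fun i => ∫ y, g y ∂empiricalMeasure z (φ i)) atTop (𝓝 (∫ y, g y ∂μ)))
    {G : Set X} (hG : IsOpen G) :
    μ G ≤ upperDensity (z ⁻¹' G) := by
  let P : ℕ → ProbabilityMeasure X := fun i =>
    ⟨empiricalMeasure z (φ i), isProbabilityMeasure_empiricalMeasure z (hφ0 i)⟩
  have hP : Tendsto P atTop (𝓝 ⟨μ, ‹_›⟩) :=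
    ProbabilityMeasure.tendsto_iff_forall_integral_tendsto.mpr hconv
  calc μ G
      ≤ liminf (fun i => empiricalMeasure z (φ i) G) atTop :=
        ProbabilityMeasure.le_liminf_measure_open_of_tendsto hP hG
    _ ≤ limsup (fun i => empiricalMeasure z (φ i) G) atTop := liminf_le_limsup
    _ = limsup (fun N => empiricalMeasure z N G) (map φ atTop) :=
        limsup_comp (fun N => empiricalMeasure z N G) φ atTop
    _ ≤ limsup (fun N => empiricalMeasure z N G) atTop := limsup_le_limsup_of_le hφ
    _ = upperDensity (z ⁻¹' G) := by
        simp only [empiricalMeasure_apply z _ hG.measurableSet]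
        rfl

end EmpiricalMeasure

theorem LowerSemicontinuous.isOpen_setOf_natCast_le {X : Type*} [TopologicalSpace X]
    {R : X → ℕ∞} (hR : LowerSemicontinuous R) (n : ℕ) : IsOpen {y | (n : ℕ∞) ≤ R y} := by
  cases n with
  | zero => simp
  | succ n =>
    simp only [Nat.cast_add, Nat.cast_one, ENat.add_one_le_iff (ENat.natCast_ne_top n)]
    exact hR.isOpen_preimage n

theorem ENat.toENNReal_eq_tsum (m : ℕ∞) :
    (m : ℝ≥0∞) = ∑' n : ℕ, if ((n + 1 : ℕ) : ℕ∞) ≤ m then 1 else 0 := by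
  induction m using ENat.recTopCoe with
  | top => simp
  | coe k =>
    have hle : ∀ n : ℕ, ((n + 1 : ℕ) : ℕ∞) ≤ k ↔ n < k := fun n => by
      rw [Nat.cast_le]
      omega
    simp only [hle]
    rw [tsum_eq_sum (s := Finset.range k) fun n hn => by simp_all]
    simp [Finset.filter_true_of_mem fun n hn => Finset.mem_range.mp hn]

theorem lintegral_toENNReal_eq_tsum_measure {X : Type*} [MeasurableSpace X] (μ : Measure X)
    {R : X → ℕ∞} (hR : ∀ n : ℕ, MeasurableSet {y | (n : ℕ∞) ≤ R y}) :
    ∫⁻ y, (R y : ℝ≥0∞) ∂μ = ∑' n : ℕ, μ {y | ((n + 1 : ℕ) : ℕ∞) ≤ R y} := by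
  have hind : ∀ y, (R y : ℝ≥0∞) =
      ∑' n : ℕ, Set.indicator {y | ((n + 1 : ℕ) : ℕ∞) ≤ R y} 1 y := fun y => by
    simp only [ENat.toENNReal_eq_tsum (R y), Set.indicator_apply, Set.mem_ofPred_eq, Pi.one_apply]
  simp_rw [hind]
  rw [lintegral_tsum fun n => (measurable_one.indicator (hR (n + 1))).aemeasurable]
  exact tsum_congr fun n => lintegral_indicator_one (hR (n + 1))

theorem empirical_accumulation_tail_general {X : Type*} [MetricSpace X] [MeasurableSpace X]
    [BorelSpace X] (f : X → X) (x : X)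
    (R : X → ℕ∞) (hR : LowerSemicontinuous R)
    (μ : Measure X) [IsProbabilityMeasure μ]
    (φ : ℕ → ℕ) (hφ : StrictMono φ)
    (hconv : ∀ g : BoundedContinuousFunction X ℝ,
      Tendsto (fun i : ℕ => (∑ j ∈ Finset.range (φ i), g (f^[j] x)) / (φ i : ℝ))
        atTop (nhds (∫ y, g y ∂μ))) :
    (∀ n : ℕ, 1 ≤ n → μ {y | (n : ℕ∞) ≤ R y} ≤
      limsup (fun N : ℕ =>
        (Set.ncard {j : ℕ | j < N ∧ (n : ℕ∞) ≤ R (f^[j] x)} : ℝ≥0∞) / (N : ℝ≥0∞)) atTop) ∧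
    (∫⁻ y, (R y : ℝ≥0∞) ∂μ ≤
      ∑' n : ℕ, limsup (fun N : ℕ =>
        (Set.ncard {j : ℕ | j < N ∧ ((n + 1 : ℕ) : ℕ∞) ≤ R (f^[j] x)} : ℝ≥0∞) / (N : ℝ≥0∞)) atTop) ∧
    (Tendsto (fun n : ℕ => limsup (fun N : ℕ =>
        (Set.ncard {j : ℕ | j < N ∧ (n : ℕ∞) ≤ R (f^[j] x)} : ℝ≥0∞) / (N : ℝ≥0∞)) atTop)
        atTop (nhds 0) →
      μ {y | R y = ⊤} = 0) := by
  have hshift := tendsto_add_atTop_nat 1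
  -- Dropping the index `0` makes every subsequence time positive.
  have hdens : ∀ n : ℕ, μ {y | (n : ℕ∞) ≤ R y} ≤ upperDensity {j | (n : ℕ∞) ≤ R (f^[j] x)} :=
    fun n => measure_le_upperDensity_of_isOpen (fun j => f^[j] x)
      (hφ.tendsto_atTop.comp hshift) (fun i => (hφ i.succ_pos).ne_bot)
      (fun g => by simpa only [integral_empiricalMeasure, Function.comp_def] using (hconv g).comp hshift)
      (hR.isOpen_setOf_natCast_le n)
  refine ⟨fun n _ => hdens n, ?_, fun hres => ?_⟩
  · rw [lintegral_toENNReal_eq_tsum_measure μ fun n => (hR.isOpen_setOf_natCast_le n).measurableSet]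
    exact ENNReal.tsum_le_tsum fun n => hdens (n + 1)
  · refine nonpos_iff_eq_zero.mp (ge_of_tendsto' hres fun n => ?_)
    exact (measure_mono fun y (hy : R y = ⊤) => show (n : ℕ∞) ≤ R y from hy ▸ le_top).trans (hdens n)

/-- For a lower semicontinuous R : X → ℕ ∪ {∞} and a weak* accumulation point μ of
the empirical measures of x, the μ-measure of {R ≥ n} is bounded by the upper
density of the times j with R(f^j x) ≥ n; consequently ∫ R dμ is bounded by the
tail sum, and if the residue vanishes then μ({R = ∞}) = 0. -/
theorem empirical_accumulation_tail {X : Type*} [MetricSpace X] [MeasurableSpace X]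
    [BorelSpace X] (f : X → X) (x : X)
    (R : X → ℕ∞) (hR : LowerSemicontinuous R)
    (μ : Measure X) [IsProbabilityMeasure μ]
    (φ : ℕ → ℕ) (hφ : StrictMono φ) (hφ1 : ∀ i, 1 ≤ φ i)
    (hconv : ∀ g : BoundedContinuousFunction X ℝ,
      Tendsto (fun i : ℕ => (∑ j ∈ Finset.range (φ i), g (f^[j] x)) / (φ i : ℝ))
        atTop (nhds (∫ y, g y ∂μ))) :
    (∀ n : ℕ, 1 ≤ n → μ {y | (n : ℕ∞) ≤ R y} ≤
      limsup (fun N : ℕ =>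
        (Set.ncard {j : ℕ | j < N ∧ (n : ℕ∞) ≤ R (f^[j] x)} : ℝ≥0∞) / (N : ℝ≥0∞)) atTop) ∧
    (∫⁻ y, (R y : ℝ≥0∞) ∂μ ≤
      ∑' n : ℕ, limsup (fun N : ℕ =>
        (Set.ncard {j : ℕ | j < N ∧ ((n + 1 : ℕ) : ℕ∞) ≤ R (f^[j] x)} : ℝ≥0∞) / (N : ℝ≥0∞)) atTop) ∧
    (Tendsto (fun n : ℕ => limsup (fun N : ℕ =>
        (Set.ncard {j : ℕ | j < N ∧ (n : ℕ∞) ≤ R (f^[j] x)} : ℝ≥0∞) / (N : ℝ≥0∞)) atTop)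
        atTop (nhds 0) →
      μ {y | R y = ⊤} = 0) :=
  empirical_accumulation_tail_general f x R hR μ φ hφ hconv
end
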